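/- arXiv:2105.13105 — 2 statements merged into one kernel-verified Lean document; each statement's English description precedes it below -/
import Mathlib

section
/- Let A be a unital ring and a, b ∈ A with ab = ba, ab² = b. Then for every nonnegative integer k, (a - a²b)ᵏ⁺¹ = aᵏ⁺¹(1 - ab), and consequently aᵏ⁺¹b = aᵏ holds if and only if (a - a²b)ᵏ = aᵏ(1-ab) = 0 for k ≥ 1. -/
/-!
Since `a` commutes with `b` and `ab² = b`, the element `ab` is idempotent, hence so is
`e = 1 - ab`, and `e` commutes with `a`. Then `a - a²b = ae`, so
`(ae)^(k+1) = a^(k+1) e^(k+1) = a^(k+1) e`. Finally `a^k e = a^k - a^(k+1) b`, which vanishes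
exactly when `a^(k+1) b = a^k`.
-/

theorem Commute.mul_pow_succ_of_isIdempotentElem {M : Type*} [Monoid M] {a e : M}
    (hae : Commute a e) (he : IsIdempotentElem e) (n : ℕ) :
    (a * e) ^ (n + 1) = a ^ (n + 1) * e := by
  rw [hae.mul_pow, he.pow_succ_eq]

theorem Commute.isIdempotentElem_mul_of_mul_sq_eq {M : Type*} [Monoid M] {a b : M}
    (hab : Commute a b) (h : a * b ^ 2 = b) : IsIdempotentElem (a * b) :=
  calc a * b * (a * b) = a * (b * a) * b := by simp only [mul_assoc]
    _ = a * (a * b ^ 2) := by rw [← hab.eq, sq]; simp only [mul_assoc]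
    _ = a * b := by rw [h]

theorem pow_mul_one_sub_mul_eq_zero_iff {R : Type*} [Ring R] (a b : R) (n : ℕ) :
    a ^ n * (1 - a * b) = 0 ↔ a ^ (n + 1) * b = a ^ n := by
  rw [mul_sub, mul_one, ← mul_assoc, ← pow_succ, sub_eq_zero, eq_comm]

/-- If `ab = ba` and `ab² = b`, then `(a - a²b)^(k+1) = a^(k+1)(1 - ab)`, and for
`k ≥ 1`, `a^(k+1) b = a^k` holds iff `(a - a²b)^k = a^k (1 - ab) = 0`. -/
theorem drazin_nilpotent_part {A : Type*} [Ring A] (a b : A)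
    (h1 : a * b = b * a) (h2 : a * b ^ 2 = b) :
    (∀ k : ℕ, (a - a ^ 2 * b) ^ (k + 1) = a ^ (k + 1) * (1 - a * b)) ∧
    (∀ k : ℕ, 1 ≤ k →
      ((a - a ^ 2 * b) ^ k = a ^ k * (1 - a * b) ∧
        (a ^ (k + 1) * b = a ^ k ↔ (a - a ^ 2 * b) ^ k = 0))) := by
  have hab : Commute a b := h1
  have he : IsIdempotentElem (1 - a * b) :=
    (hab.isIdempotentElem_mul_of_mul_sq_eq h2).one_sub
  have hae : Commute a (1 - a * b) :=
    (Commute.one_right a).sub_right ((Commute.refl a).mul_right hab)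
  have hfac : a - a ^ 2 * b = a * (1 - a * b) := by
    rw [mul_sub, mul_one, ← mul_assoc, ← sq]
  have hpow (k : ℕ) : (a - a ^ 2 * b) ^ (k + 1) = a ^ (k + 1) * (1 - a * b) := by
    rw [hfac, hae.mul_pow_succ_of_isIdempotentElem he]
  refine ⟨hpow, fun k hk => ?_⟩
  obtain ⟨m, rfl⟩ := Nat.exists_eq_add_one_of_ne_zero (Nat.one_le_iff_ne_zero.mp hk)
  rw [hpow, pow_mul_one_sub_mul_eq_zero_iff]
  exact ⟨rfl, Iff.rfl⟩
end

section
/- Let A be a unital ring and a, b ∈ A commuting elements (ab = ba) that both have Drazin inverses aᵈ and bᵈ. Then ab has a Drazin inverse, and (ab)ᵈ = aᵈbᵈ. -/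
/-!
Since `a` commutes with `b`, Drazin's theorem makes `a, b, aᵈ, bᵈ` pairwise commute, and all
three defining identities for `aᵈ bᵈ` then split into the corresponding identities for `a` and
`b`; the index can be taken to be any common upper bound of the indices of `a` and `b`.
-/

/-- `b` is a Drazin inverse of `a` in a unital ring. -/
def IsDrazinInverse {A : Type*} [Ring A] (a b : A) : Prop :=
  a * b = b * a ∧ a * b ^ 2 = b ∧ ∃ k : ℕ, a ^ (k + 1) * b = a ^ k

open Filter

namespace IsDrazinInverse

variable {A : Type*} [Ring A] {a d : A}

theorem commute (h : IsDrazinInverse a d) : Commute a d := h.1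

theorem mul_sq (h : IsDrazinInverse a d) : a * d ^ 2 = d := h.2.1

theorem pow_mul_pow_succ (h : IsDrazinInverse a d) (n : ℕ) : a ^ n * d ^ (n + 1) = d := by
  induction n with
  | zero => simp
  | succ n ih =>
    rw [pow_succ' a n, pow_succ d (n + 1), mul_assoc, ← mul_assoc (a ^ n), ih, ← sq, h.mul_sq]

theorem eventually_pow_succ_mul (h : IsDrazinInverse a d) :
    ∀ᶠ n in atTop, a ^ (n + 1) * d = a ^ n := by
  obtain ⟨k, hk⟩ := h.2.2
  refine eventually_atTop.2 ⟨k, Nat.le_induction hk fun n _ ih => ?_⟩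
  rw [pow_succ' a (n + 1), mul_assoc, ih, ← pow_succ']

theorem commute_of_commute (h : IsDrazinInverse a d) {c : A} (hc : Commute a c) :
    Commute d c := by
  obtain ⟨k, hk⟩ := h.2.2
  have hkc : Commute (a ^ k) c := hc.pow_left k
  have hd_right : d ^ (k + 1) * a ^ k = d := by
    rw [((h.commute.pow_pow k (k + 1)).eq).symm, h.pow_mul_pow_succ]
  have hproj : a ^ k * (a * d) = a ^ k := by rw [← mul_assoc, ← pow_succ, hk]
  -- both products equal `a d c d`
  have hcd : c * d = a * d * (c * d) := calc
    c * d = a ^ k * (c * d ^ (k + 1)) := by rw [hkc.left_comm, h.pow_mul_pow_succ]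
    _ = a ^ k * (a * d) * (c * d ^ (k + 1)) := by rw [hproj]
    _ = a * d * (a ^ k * (c * d ^ (k + 1))) := by
      rw [((Commute.refl a).mul_right h.commute).pow_left k |>.eq, mul_assoc]
    _ = a * d * (c * d) := by rw [hkc.left_comm, h.pow_mul_pow_succ]
  have hdc : d * c = a * d * (c * d) := calc
    d * c = d ^ (k + 1) * (c * a ^ k) := by rw [← hkc.eq, ← mul_assoc, hd_right]
    _ = d ^ (k + 1) * (a ^ k * (c * (a * d))) := by rw [hkc.left_comm, hproj]
    _ = a * d * (c * d) := by
      rw [← mul_assoc, hd_right, ← hc.left_comm, ← h.commute.left_comm, mul_assoc]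
  exact hdc.trans hcd.symm

end IsDrazinInverse

/-- If `a` and `b` commute and have Drazin inverses `ad` and `bd`, then `ab`
has Drazin inverse `ad bd`. -/
theorem drazin_mul {A : Type*} [Ring A] (a b ad bd : A) (hab : a * b = b * a)
    (ha : IsDrazinInverse a ad) (hb : IsDrazinInverse b bd) :
    IsDrazinInverse (a * b) (ad * bd) := by
  have hab : Commute a b := hab
  have hadb : Commute ad b := ha.commute_of_commute hab
  have habd : Commute a bd := (hb.commute_of_commute hab.symm).symm
  have hadbd : Commute ad bd := ha.commute_of_commute habd
  refine ⟨((ha.commute.mul_right habd).mul_left (hadb.symm.mul_right hb.commute)).eq, ?_,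
    (ha.eventually_pow_succ_mul.and hb.eventually_pow_succ_mul).exists.imp fun n hn => ?_⟩
  · rw [hadbd.mul_pow, (hadb.pow_left 2).symm.mul_mul_mul_comm, ha.mul_sq, hb.mul_sq]
  · rw [hab.mul_pow, hab.mul_pow, ((hadb.pow_right (n + 1)).symm).mul_mul_mul_comm, hn.1, hn.2]
end
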